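/- (Optimality condition.) Let A ∈ ℝ^{m×n}, D ∈ ℝ^{n×p}, λ > 0, ρ > 0, x ∈ ℝⁿ, and b = Ax + w with noise w ∈ ℝᵐ satisfying ‖DᵀAᵀw‖_∞ ≤ λ/2. Let (x̂_ρ, ẑ_ρ) be a minimizer of the RALASSO problem min_{x∈ℝⁿ, z∈ℝᵖ} (1/2)‖Ax − b‖₂² + λ‖z‖₁ + (ρ/2)‖z − Dᵀx‖₂², and set h = x̂_ρ − x. Then ‖DᵀAᵀAh‖_∞ ≤ (1/2 + ‖DᵀD‖_{1,1})·λ. -/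
import Mathlib


open scoped BigOperators
open Matrix

/-- Euclidean (ℓ₂) norm of a vector in ℝᵏ. -/
noncomputable def l2norm {k : ℕ} (v : Fin k → ℝ) : ℝ := Real.sqrt (∑ i, (v i) ^ 2)

/-- ℓ₁ norm of a vector in ℝᵏ. -/
noncomputable def l1norm {k : ℕ} (v : Fin k → ℝ) : ℝ := ∑ i, |v i|

/-- ℓ∞ norm of a vector in ℝᵏ. -/
noncomputable def linfnorm {k : ℕ} (v : Fin k → ℝ) : ℝ := ⨆ i, |v i|

/-- The induced `(1,1)` matrix norm: `‖M‖_{1,1} = sup_{x ≠ 0} ‖Mx‖₁ / ‖x‖₁`. -/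
noncomputable def matnorm11 {a b : ℕ} (M : Matrix (Fin a) (Fin b) ℝ) : ℝ :=
  ⨆ x : {x : Fin b → ℝ // x ≠ 0}, l1norm (M.mulVec x.1) / l1norm x.1

lemma l2norm_sq {k : ℕ} (v : Fin k → ℝ) : (l2norm v) ^ 2 = ∑ i, (v i) ^ 2 :=
  Real.sq_sqrt (Finset.sum_nonneg fun _ _ => sq_nonneg _)

lemma l1norm_nonneg {k : ℕ} (v : Fin k → ℝ) : 0 ≤ l1norm v :=
  Finset.sum_nonneg fun _ _ => abs_nonneg _

lemma l1norm_add_le {k : ℕ} (v u : Fin k → ℝ) : l1norm (v + u) ≤ l1norm v + l1norm u := by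
  rw [l1norm, l1norm, l1norm, ← Finset.sum_add_distrib]
  exact Finset.sum_le_sum fun i _ => abs_add_le _ _

lemma l1norm_smul {k : ℕ} (t : ℝ) (v : Fin k → ℝ) : l1norm (t • v) = |t| * l1norm v := by
  simp [l1norm, abs_mul, Finset.mul_sum]

lemma l1norm_mulVec_le {a b : ℕ} (M : Matrix (Fin a) (Fin b) ℝ) (x : Fin b → ℝ) :
    l1norm (M.mulVec x) ≤ (∑ i, ∑ j, |M i j|) * l1norm x := by
  set K := ∑ i, ∑ j, |M i j| with hK
  calc l1norm (M.mulVec x) = ∑ i, |∑ j, M i j * x j| := by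
        simp [l1norm, Matrix.mulVec, dotProduct]
    _ ≤ ∑ i, ∑ j, |M i j| * |x j| := by
        refine Finset.sum_le_sum fun i _ => ?_
        refine (Finset.abs_sum_le_sum_abs _ _).trans_eq ?_
        simp [abs_mul]
    _ = ∑ j, (∑ i, |M i j|) * |x j| := by
        rw [Finset.sum_comm]
        simp [Finset.sum_mul]
    _ ≤ ∑ j, K * |x j| := by
        refine Finset.sum_le_sum fun j _ => mul_le_mul_of_nonneg_right ?_ (abs_nonneg _)
        exact Finset.sum_le_sum fun i _ =>
          Finset.single_le_sum (f := fun j' => |M i j'|) (fun _ _ => abs_nonneg _)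
            (Finset.mem_univ j)
    _ = K * l1norm x := by rw [l1norm, Finset.mul_sum]

lemma matnorm11_nonneg {a b : ℕ} (M : Matrix (Fin a) (Fin b) ℝ) : 0 ≤ matnorm11 M :=
  Real.iSup_nonneg fun x => div_nonneg (l1norm_nonneg _) (l1norm_nonneg _)

lemma le_matnorm11 {a b : ℕ} (M : Matrix (Fin a) (Fin b) ℝ) (x : Fin b → ℝ) (hx : x ≠ 0) :
    l1norm (M.mulVec x) / l1norm x ≤ matnorm11 M := by
  have hbdd : BddAbove (Set.range fun x : {x : Fin b → ℝ // x ≠ 0} =>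
      l1norm (M.mulVec x.1) / l1norm x.1) := by
    refine ⟨∑ i, ∑ j, |M i j|, ?_⟩
    rintro r ⟨y, rfl⟩
    by_cases h : l1norm y.1 = 0
    · simp [h]
      exact Finset.sum_nonneg fun _ _ => Finset.sum_nonneg fun _ _ => abs_nonneg _
    · have hpos : 0 < l1norm y.1 := lt_of_le_of_ne (l1norm_nonneg _) (Ne.symm h)
      rw [div_le_iff₀ hpos]
      exact l1norm_mulVec_le M y.1
  exact le_ciSup hbdd ⟨x, hx⟩

/-- optimality condition: with `b = Ax + w`, `‖DᵀAᵀw‖_∞ ≤ λ/2`, and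
`(x̂_ρ, ẑ_ρ)` a RALASSO minimizer, the error `h = x̂_ρ − x` satisfies
`‖DᵀAᵀAh‖_∞ ≤ (1/2 + ‖DᵀD‖_{1,1})·λ`. -/
theorem ralasso_optimality_condition
    {m n p : ℕ} (A : Matrix (Fin m) (Fin n) ℝ) (D : Matrix (Fin n) (Fin p) ℝ)
    (lam ρ : ℝ) (hlam : 0 < lam) (hρ : 0 < ρ)
    (x : Fin n → ℝ) (w b : Fin m → ℝ) (hb : b = A.mulVec x + w)
    (hw : linfnorm (D.transpose.mulVec (A.transpose.mulVec w)) ≤ lam / 2)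
    (xh : Fin n → ℝ) (zh : Fin p → ℝ)
    (hmin : ∀ (y : Fin n → ℝ) (z : Fin p → ℝ),
      1 / 2 * (l2norm (A.mulVec xh - b)) ^ 2 + lam * l1norm zh
          + ρ / 2 * (l2norm (zh - D.transpose.mulVec xh)) ^ 2
        ≤ 1 / 2 * (l2norm (A.mulVec y - b)) ^ 2 + lam * l1norm z
          + ρ / 2 * (l2norm (z - D.transpose.mulVec y)) ^ 2) :
    linfnorm (D.transpose.mulVec (A.transpose.mulVec (A.mulVec (xh - x))))
      ≤ (1 / 2 + matnorm11 (D.transpose * D)) * lam := by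
  set N := matnorm11 (D.transpose * D) with hN
  have hNnn : 0 ≤ N := matnorm11_nonneg _
  set r : Fin m → ℝ := A.mulVec xh - b with hr
  -- key gradient-type inequality
  have key : ∀ u : Fin n → ℝ, |r ⬝ᵥ A.mulVec u| ≤ lam * l1norm (D.transpose.mulVec u) := by
    intro u
    set s : Fin m → ℝ := A.mulVec u with hs
    set c : ℝ := r ⬝ᵥ s with hc
    set q : ℝ := ∑ j, (s j) ^ 2 with hq
    set R : ℝ := l1norm (D.transpose.mulVec u) with hR
    have hqnn : 0 ≤ q := Finset.sum_nonneg fun _ _ => sq_nonneg _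
    have hRnn : 0 ≤ R := l1norm_nonneg _
    have claim1 : ∀ t : ℝ, 0 ≤ t * c + t ^ 2 * q / 2 + |t| * (lam * R) := by
      intro t
      have H := hmin (xh + t • u) (zh + t • (D.transpose.mulVec u))
      have e1 : A.mulVec (xh + t • u) - b = r + t • s := by
        rw [Matrix.mulVec_add, Matrix.mulVec_smul, hr, hs]; abel
      have e2 : (zh + t • D.transpose.mulVec u) - D.transpose.mulVec (xh + t • u)
          = zh - D.transpose.mulVec xh := by
        rw [Matrix.mulVec_add, Matrix.mulVec_smul]; abel
      have e3 : (l2norm (r + t • s)) ^ 2 = (l2norm r) ^ 2 + 2 * (t * c) + t ^ 2 * q := by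
        rw [l2norm_sq, l2norm_sq, hc, hq, dotProduct]
        simp only [Pi.add_apply, Pi.smul_apply, smul_eq_mul, Finset.mul_sum,
          ← Finset.sum_add_distrib]
        exact Finset.sum_congr rfl fun j _ => by ring
      have e4 : l1norm (zh + t • D.transpose.mulVec u) ≤ l1norm zh + |t| * R := by
        refine (l1norm_add_le _ _).trans ?_
        rw [l1norm_smul, hR]
      have e5 : lam * l1norm (zh + t • D.transpose.mulVec u)
          ≤ lam * l1norm zh + |t| * (lam * R) := by
        calc lam * l1norm (zh + t • D.transpose.mulVec u) ≤ lam * (l1norm zh + |t| * R) :=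
              mul_le_mul_of_nonneg_left e4 hlam.le
          _ = lam * l1norm zh + |t| * (lam * R) := by ring
      rw [e1, e2, e3] at H
      linarith [H, e5]
    have claim1' : ∀ t : ℝ, 0 < t → |c| ≤ t * q / 2 + lam * R := by
      intro t ht
      rcases le_or_gt 0 c with hc0 | hc0
      · have h1 := claim1 (-t)
        rw [abs_neg, abs_of_pos ht] at h1
        have h2 : t * c ≤ t * (t * q / 2 + lam * R) := by nlinarith [h1]
        rw [abs_of_nonneg hc0]
        exact le_of_mul_le_mul_left h2 ht
      · have h1 := claim1 t
        rw [abs_of_pos ht] at h1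
        have h2 : t * (-c) ≤ t * (t * q / 2 + lam * R) := by nlinarith [h1]
        rw [abs_of_neg hc0]
        exact le_of_mul_le_mul_left h2 ht
    refine le_of_forall_pos_le_add ?_
    intro ε hε
    have hq1 : (0:ℝ) < q + 1 := by linarith
    set δ : ℝ := ε / (q + 1) with hδdef
    have hδ : 0 < δ := div_pos hε hq1
    have hδq : δ * q ≤ ε := by
      rw [hδdef, div_mul_eq_mul_div, div_le_iff₀ hq1]
      nlinarith [hε.le, hqnn]
    have := claim1' δ hδ
    have hδq' : 0 ≤ δ * q := mul_nonneg hδ.le hqnn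
    linarith
  -- finish coordinatewise
  refine Real.iSup_le (fun i => ?_) (by nlinarith)
  -- split the vector
  have hsplit : D.transpose.mulVec (A.transpose.mulVec (A.mulVec (xh - x)))
      = D.transpose.mulVec (A.transpose.mulVec r) + D.transpose.mulVec (A.transpose.mulVec w) := by
    have hAx : A.mulVec (xh - x) = r + w := by
      rw [Matrix.mulVec_sub, hr, hb]; abel
    rw [hAx, Matrix.mulVec_add, Matrix.mulVec_add]
  -- bound on noise coordinate
  have hwco : |(D.transpose.mulVec (A.transpose.mulVec w)) i| ≤ lam / 2 := by
    refine le_trans ?_ hw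
    unfold linfnorm
    exact le_ciSup (f := fun j => |(D.transpose.mulVec (A.transpose.mulVec w)) j|)
      (Set.Finite.bddAbove (Set.finite_range _)) i
  -- bound on residual coordinate
  set u : Fin n → ℝ := D.mulVec (Pi.single i 1) with hu
  have hco : (D.transpose.mulVec (A.transpose.mulVec r)) i = r ⬝ᵥ A.mulVec u := by
    have step1 : r ⬝ᵥ A.mulVec u = (A.transpose.mulVec r) ⬝ᵥ u := by
      rw [Matrix.dotProduct_mulVec, Matrix.mulVec_transpose]
    have step2 : (A.transpose.mulVec r) ⬝ᵥ u
        = (D.transpose.mulVec (A.transpose.mulVec r)) ⬝ᵥ (Pi.single i 1) := by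
      rw [hu, Matrix.dotProduct_mulVec, Matrix.mulVec_transpose, Matrix.mulVec_transpose]
    rw [step1, step2, dotProduct_single, mul_one]
  have hDu : D.transpose.mulVec u = (D.transpose * D).mulVec (Pi.single i 1) := by
    rw [hu, Matrix.mulVec_mulVec]
  have hsingle_ne : (Pi.single i 1 : Fin p → ℝ) ≠ 0 := by
    intro h
    simpa using congrFun h i
  have hsingle_l1 : l1norm (Pi.single i 1 : Fin p → ℝ) = 1 := by
    simp [l1norm, Pi.single_apply, apply_ite abs, Finset.sum_ite_eq']
  have hB : l1norm (D.transpose.mulVec u) ≤ N := by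
    rw [hDu, hN]
    have := le_matnorm11 (D.transpose * D) (Pi.single i 1) hsingle_ne
    rwa [hsingle_l1, div_one] at this
  have hrco : |(D.transpose.mulVec (A.transpose.mulVec r)) i| ≤ lam * N := by
    rw [hco]
    exact (key u).trans (mul_le_mul_of_nonneg_left hB hlam.le)
  rw [hsplit]
  calc |(D.transpose.mulVec (A.transpose.mulVec r)
        + D.transpose.mulVec (A.transpose.mulVec w)) i|
      ≤ |(D.transpose.mulVec (A.transpose.mulVec r)) i|
        + |(D.transpose.mulVec (A.transpose.mulVec w)) i| := by
        rw [Pi.add_apply]; exact abs_add_le _ _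
    _ ≤ lam * N + lam / 2 := add_le_add hrco hwco
    _ = (1 / 2 + N) * lam := by ring
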